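/- arXiv:2310.11129 — 6 statements merged into one kernel-verified Lean document; each statement's English description precedes it below -/
import Mathlib

section
/- Let (a_2, …, a_k) be non-negative integers with odd multinomial coefficient (|a| choose a_2,…,a_k). Then there is a unique index l such that the multinomial coefficient (|a|−1 choose a_2,…,a_l−1,…,a_k) is odd; moreover, if 2^p is the largest power of 2 dividing all the a_i, then l is the unique index such that 2^{p+1} does not divide a_l. -/
open Finset

/-- Binary digit sum. -/
private def sdig (n : ℕ) : ℕ := (Nat.digits 2 n).sum

private lemma sdig_two_mul (n : ℕ) : sdig (2 * n) = sdig n := by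
  rcases Nat.eq_zero_or_pos n with h | h
  · simp [h]
  · unfold sdig
    rw [Nat.digits_def' (by norm_num : 1 < 2) (by omega)]
    simp

private lemma sdig_two_mul_add_one (n : ℕ) : sdig (2 * n + 1) = sdig n + 1 := by
  unfold sdig
  rw [Nat.digits_def' (by norm_num : 1 < 2) (by omega)]
  simp [Nat.add_mul_div_left, Nat.add_mul_mod_self_left, add_comm]

private lemma sdig_pow_mul (p n : ℕ) : sdig (2 ^ p * n) = sdig n := by
  induction p with
  | zero => simp
  | succ p ih => rw [pow_succ, mul_comm (2^p) 2, mul_assoc, sdig_two_mul, ih]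

private lemma sdig_le (n : ℕ) : sdig n ≤ n := Nat.digit_sum_le 2 n

private lemma vfact_add_sdig (n : ℕ) : padicValNat 2 (Nat.factorial n) + sdig n = n := by
  have h := sub_one_mul_padicValNat_factorial (p := 2) n
  have h2 := sdig_le n
  unfold sdig at *
  omega

private lemma odd_iff_padic {n : ℕ} (h : n ≠ 0) : Odd n ↔ padicValNat 2 n = 0 := by
  rw [Nat.odd_iff, padicValNat.eq_zero_iff, Nat.two_dvd_ne_zero]
  omega

private lemma v_prod {ι : Type*} (t : Finset ι) (g : ι → ℕ) (h : ∀ i ∈ t, g i ≠ 0) :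
    padicValNat 2 (∏ i ∈ t, g i) = ∑ i ∈ t, padicValNat 2 (g i) := by
  classical
  induction t using Finset.cons_induction with
  | empty => simp
  | cons x t hx ih =>
    rw [Finset.prod_cons, Finset.sum_cons,
      padicValNat.mul (h x (Finset.mem_cons_self x t))
        (Finset.prod_ne_zero_iff.mpr fun i hi => h i (Finset.mem_cons_of_mem hi)),
      ih fun i hi => h i (Finset.mem_cons_of_mem hi)]

/-- Key identity: `v₂(multinomial) + s(∑ f) = ∑ s(f i)`. -/
private lemma multi_id {ι : Type*} (t : Finset ι) (f : ι → ℕ) :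
    padicValNat 2 (Nat.multinomial t f) + sdig (∑ i ∈ t, f i) = ∑ i ∈ t, sdig (f i) := by
  have hspec := Nat.multinomial_spec t f
  have h1 : padicValNat 2 (∏ i ∈ t, Nat.factorial (f i)) + padicValNat 2 (Nat.multinomial t f)
      = padicValNat 2 (Nat.factorial (∑ i ∈ t, f i)) := by
    rw [← padicValNat.mul (Finset.prod_ne_zero_iff.mpr fun i _ => (Nat.factorial_pos _).ne')
      (Nat.multinomial_pos t f).ne', hspec]
  rw [v_prod t _ (fun i _ => (Nat.factorial_pos _).ne')] at h1
  have h2 := vfact_add_sdig (∑ i ∈ t, f i)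
  have h3 : ∑ i ∈ t, (padicValNat 2 (Nat.factorial (f i)) + sdig (f i)) = ∑ i ∈ t, f i :=
    Finset.sum_congr rfl fun i _ => vfact_add_sdig (f i)
  rw [Finset.sum_add_distrib] at h3
  omega

private lemma multi_odd_iff {ι : Type*} (t : Finset ι) (f : ι → ℕ) :
    Odd (Nat.multinomial t f) ↔ sdig (∑ i ∈ t, f i) = ∑ i ∈ t, sdig (f i) := by
  rw [odd_iff_padic (Nat.multinomial_pos t f).ne']
  have := multi_id t f
  omega

private lemma sdig_sum_le {ι : Type*} (t : Finset ι) (f : ι → ℕ) :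
    sdig (∑ i ∈ t, f i) ≤ ∑ i ∈ t, sdig (f i) := by
  have := multi_id t f; omega

private lemma sdig_add_le (x y : ℕ) : sdig (x + y) ≤ sdig x + sdig y := by
  have := sdig_sum_le (univ : Finset (Fin 2)) ![x, y]
  simpa [Fin.sum_univ_two] using this

/-- Two odds cannot add without a carry. -/
private lemma sdig_add_ne (x y : ℕ) (hx : Odd x) (hy : Odd y) :
    sdig (x + y) ≠ sdig x + sdig y := by
  intro h
  have hid := multi_id (univ : Finset (Fin 2)) ![x, y]
  simp only [Fin.sum_univ_two, Matrix.cons_val_zero, Matrix.cons_val_one, Matrix.head_cons,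
    Nat.multinomial_univ_two] at hid
  have hch : (x + y).factorial / (x.factorial * y.factorial) = (x + y).choose x := by
    rw [Nat.choose_eq_factorial_div_factorial (Nat.le_add_right x y), Nat.add_sub_cancel_left]
  rw [hch] at hid
  have hv : padicValNat 2 ((x + y).choose x) = 0 := by omega
  have hoddc : Odd ((x + y).choose x) :=
    (odd_iff_padic (Nat.choose_pos (Nat.le_add_right x y)).ne').mpr hv
  have hmod := Choose.choose_modEq_choose_mod_mul_choose_div_nat (p := 2) (n := x + y) (k := x)
  rw [Nat.odd_iff] at hx hy
  have h1 : (x + y) % 2 = 0 := by omega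
  rw [h1, hx] at hmod
  simp [Nat.ModEq] at hmod
  rw [Nat.odd_iff, hmod] at hoddc
  exact absurd hoddc (by norm_num)

private lemma sdig_pred (n : ℕ) (h : 0 < n) :
    sdig (n - 1) + 1 = sdig n + padicValNat 2 n := by
  induction n using Nat.strong_induction_on with
  | _ n ih =>
    rcases Nat.even_or_odd n with he | ho
    · obtain ⟨m, hm⟩ := he
      have hm' : n = 2 * m := by omega
      have hmpos : 0 < m := by omega
      have hv : padicValNat 2 n = padicValNat 2 m + 1 := by
        rw [hm', padicValNat.mul two_ne_zero (by omega), padicValNat.self one_lt_two]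
        omega
      have hn1 : n - 1 = 2 * (m - 1) + 1 := by omega
      have ihm := ih m (by omega) hmpos
      have hs1 : sdig (n - 1) = sdig (m - 1) + 1 := by rw [hn1, sdig_two_mul_add_one]
      have hs2 : sdig n = sdig m := by rw [hm', sdig_two_mul]
      omega
    · obtain ⟨m, hm⟩ := ho
      have hv : padicValNat 2 n = 0 := (odd_iff_padic (by omega)).mp ⟨m, hm⟩
      have hn1 : n - 1 = 2 * m := by omega
      have hs1 : sdig (n - 1) = sdig m := by rw [hn1, sdig_two_mul]
      have hs2 : sdig n = sdig m + 1 := by rw [hm, sdig_two_mul_add_one]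
      omega




/-- If the multinomial coefficient of `a = (a_2,…,a_k)` is odd, then there
is a unique index `l` such that the multinomial coefficient of `â_l` (where `a_l` is decreased
by one) is odd; moreover, if `2^p` is the largest power of two dividing all `a_i`, then `l` is
the unique index such that `2^(p+1)` does not divide `a_l`. -/
theorem multinomial_odd_unique_decrease (k : ℕ) (a : Fin k → ℕ)
    (hodd : Odd (Nat.multinomial Finset.univ a))
    (p : ℕ) (hp : ∀ i, 2 ^ p ∣ a i) (hp' : ¬ ∀ i, 2 ^ (p + 1) ∣ a i) :
    ∃ l : Fin k,
      (0 < a l ∧ Odd (Nat.multinomial Finset.univ (Function.update a l (a l - 1)))) ∧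
      (∀ m : Fin k,
        (0 < a m ∧ Odd (Nat.multinomial Finset.univ (Function.update a m (a m - 1)))) → m = l) ∧
      ¬ 2 ^ (p + 1) ∣ a l ∧
      (∀ m : Fin k, ¬ 2 ^ (p + 1) ∣ a m → m = l) := by
  classical
  push_neg at hp'
  obtain ⟨l, hl⟩ := hp'
  set b : Fin k → ℕ := fun i => a i / 2 ^ p with hb
  have hab : ∀ i, a i = 2 ^ p * b i := fun i => (Nat.mul_div_cancel' (hp i)).symm
  have hodd_iff : ∀ i, (¬ 2 ^ (p + 1) ∣ a i) ↔ Odd (b i) := by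
    intro i
    rw [hab i, pow_succ, mul_comm (2 ^ p) 2, mul_comm (2 ^ p) (b i),
      Nat.mul_dvd_mul_iff_right (pow_pos (two_pos : (0:ℕ) < 2) p), Nat.odd_iff,
      ← Nat.two_dvd_ne_zero]
  have hbl : Odd (b l) := (hodd_iff l).mp hl
  -- digit-sum condition for a and b
  have hs_a : sdig (∑ i, a i) = ∑ i, sdig (a i) := (multi_odd_iff _ _).mp hodd
  have hsum : ∑ i, a i = 2 ^ p * ∑ i, b i := by
    rw [Finset.mul_sum]; exact Finset.sum_congr rfl fun i _ => hab i
  have hs_ab : ∀ i, sdig (a i) = sdig (b i) := fun i => by rw [hab i, sdig_pow_mul]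
  have hs_b : sdig (∑ i, b i) = ∑ i, sdig (b i) := by
    rw [← sdig_pow_mul p (∑ i, b i), ← hsum, hs_a]
    exact Finset.sum_congr rfl fun i _ => hs_ab i
  -- uniqueness of odd entries of b
  have huniq : ∀ m, Odd (b m) → m = l := by
    intro m hm
    by_contra hne
    have hlm : l ∈ (univ : Finset (Fin k)).erase m := Finset.mem_erase.mpr ⟨fun h => hne h.symm, Finset.mem_univ l⟩
    have e1 : b m + (b l + ∑ i ∈ ((univ : Finset (Fin k)).erase m).erase l, b i) = ∑ i, b i := by
      rw [Finset.add_sum_erase _ b hlm, Finset.add_sum_erase _ b (Finset.mem_univ m)]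
    have e2 : sdig (b m) + (sdig (b l) + ∑ i ∈ ((univ : Finset (Fin k)).erase m).erase l, sdig (b i))
        = ∑ i, sdig (b i) := by
      rw [Finset.add_sum_erase _ (fun i => sdig (b i)) hlm,
        Finset.add_sum_erase _ (fun i => sdig (b i)) (Finset.mem_univ m)]
    set R := ∑ i ∈ ((univ : Finset (Fin k)).erase m).erase l, b i with hR
    have sub1 : sdig (b m + b l + R) ≤ sdig (b m + b l) + sdig R := sdig_add_le _ _
    have sub2 : sdig (b m + b l) ≤ sdig (b m) + sdig (b l) := sdig_add_le _ _
    have sub3 : sdig R ≤ ∑ i ∈ ((univ : Finset (Fin k)).erase m).erase l, sdig (b i) :=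
      sdig_sum_le _ _
    have e1' : sdig (∑ i, b i) = sdig (b m + b l + R) := by rw [← e1, add_assoc]
    have := sdig_add_ne (b m) (b l) hm hbl
    omega
  -- b is even off l, so the total sum of b is odd
  have hBodd : Odd (∑ i, b i) := by
    rw [← Finset.add_sum_erase _ b (Finset.mem_univ l)]
    refine hbl.add_even (Finset.even_sum _ fun i hi => ?_)
    rcases Nat.even_or_odd (b i) with h | h
    · exact h
    · exact absurd (huniq i h) (Finset.mem_erase.mp hi).1
  have hBne : (∑ i, b i) ≠ 0 := by
    intro h; rw [h] at hBodd; simp [Nat.odd_iff] at hBodd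
  have hblne : b l ≠ 0 := by
    intro h; rw [h] at hbl; simp [Nat.odd_iff] at hbl
  have hal_pos : 0 < a l := by
    rw [hab l]; positivity
  have hSpos : 0 < ∑ i, a i := by
    calc 0 < a l := hal_pos
    _ ≤ ∑ i, a i := Finset.single_le_sum (fun i _ => Nat.zero_le _) (Finset.mem_univ l)
  -- valuations
  have hvS : padicValNat 2 (∑ i, a i) = p := by
    rw [hsum, padicValNat.mul (pow_ne_zero p two_ne_zero) hBne, padicValNat.prime_pow,
      (odd_iff_padic hBne).mp hBodd]
    omega
  have hv_a : ∀ i, b i ≠ 0 → padicValNat 2 (a i) = p + padicValNat 2 (b i) := by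
    intro i hi
    rw [hab i, padicValNat.mul (pow_ne_zero p two_ne_zero) hi, padicValNat.prime_pow]
  -- criterion: for 0 < a m, the decreased multinomial is odd iff v(a m) = v(S)
  have hcrit : ∀ m : Fin k, 0 < a m →
      (Odd (Nat.multinomial Finset.univ (Function.update a m (a m - 1))) ↔
        padicValNat 2 (a m) = padicValNat 2 (∑ i, a i)) := by
    intro m hm
    have hS1 : sdig ((∑ i, a i) - 1) + 1 = sdig (∑ i, a i) + padicValNat 2 (∑ i, a i) :=
      sdig_pred _ hSpos
    have hm1 : sdig (a m - 1) + 1 = sdig (a m) + padicValNat 2 (a m) := sdig_pred _ hm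
    have hsplit : sdig (a m) + ∑ i ∈ (univ : Finset (Fin k)).erase m, sdig (a i)
        = ∑ i, sdig (a i) := Finset.add_sum_erase _ (fun i => sdig (a i)) (Finset.mem_univ m)
    have hsplitS : a m + ∑ i ∈ (univ : Finset (Fin k)).erase m, a i = ∑ i, a i :=
      Finset.add_sum_erase _ a (Finset.mem_univ m)
    have hfun : (fun i => Function.update a m (a m - 1) i) = Function.update a m (a m - 1) := rfl
    have hsum' : ∑ i, Function.update a m (a m - 1) i = (∑ i, a i) - 1 := by
      rw [Finset.sum_update_of_mem (Finset.mem_univ m), ← Finset.erase_eq]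
      omega
    have hsdig' : ∑ i, sdig (Function.update a m (a m - 1) i)
        = sdig (a m - 1) + ∑ i ∈ (univ : Finset (Fin k)).erase m, sdig (a i) := by
      have : (fun i => sdig (Function.update a m (a m - 1) i))
          = Function.update (fun i => sdig (a i)) m (sdig (a m - 1)) := by
        funext i
        rcases eq_or_ne i m with h | h
        · subst h; simp
        · simp [Function.update_apply, h]
      rw [this, Finset.sum_update_of_mem (Finset.mem_univ m), ← Finset.erase_eq]
    rw [multi_odd_iff, hsum', hsdig']
    omega
  refine ⟨l, ⟨hal_pos, ?_⟩, ?_, hl, fun m hm => huniq m ((hodd_iff m).mp hm)⟩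
  · rw [hcrit l hal_pos, hvS, hv_a l hblne, (odd_iff_padic hblne).mp hbl]
    omega
  · rintro m ⟨hm0, hmodd⟩
    rw [hcrit m hm0, hvS] at hmodd
    have hbm : b m ≠ 0 := by
      intro h
      rw [hab m, h, mul_zero] at hm0
      exact absurd hm0 (lt_irrefl 0)
    rw [hv_a m hbm] at hmodd
    have : padicValNat 2 (b m) = 0 := by omega
    exact huniq m ((odd_iff_padic hbm).mpr this)
end

section
/- Let (a_2, …, a_k) be non-negative integers such that the multinomial coefficient (|a| choose a) is even and for some index j with a_j ≥ 1, the coefficient (|a|−1 choose â_j) is odd. Then there is a unique index l ≠ j with a_l ≥ 1 such that (|a|−1 choose â_l) is odd. -/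
open Finset
open scoped Nat

/-- `C(m+n, m)` is odd iff `m` and `n` have disjoint binary digits. -/
lemma odd_choose_add : ∀ m n : ℕ, (Odd ((m + n).choose m) ↔ ∀ b, ¬((m.testBit b) ∧ (n.testBit b)))
  | m, n => by
    rcases Nat.eq_zero_or_pos m with hm | hm
    · subst hm; simp
    have h2 : Fact (Nat.Prime 2) := ⟨Nat.prime_two⟩
    have hmod := @Choose.choose_modEq_choose_mod_mul_choose_div_nat (m + n) m 2 h2
    by_cases hpar : m % 2 = 1 ∧ n % 2 = 1
    · -- carry at bit 0: choose is even, and bit 0 is shared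
      constructor
      · intro hodd
        exfalso
        have h0 : (m + n) % 2 = 0 := by omega
        rw [h0, hpar.1] at hmod
        have hz : Nat.choose 0 1 = 0 := rfl
        rw [hz, zero_mul] at hmod
        unfold Nat.ModEq at hmod
        rw [Nat.odd_iff] at hodd
        omega
      · intro h
        exact absurd ⟨by simp [Nat.testBit_zero, hpar.1], by simp [Nat.testBit_zero, hpar.2]⟩ (h 0)
    · -- no carry at bit 0
      have hdiv : (m + n) / 2 = m / 2 + n / 2 := by omega
      have hmd : (m + n) % 2 = m % 2 + n % 2 := by omega
      have h1 : ((m + n) % 2).choose (m % 2) = 1 := by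
        have := Nat.mod_two_eq_zero_or_one m
        have := Nat.mod_two_eq_zero_or_one n
        rcases this with h | h <;> rcases ‹m % 2 = 0 ∨ m % 2 = 1› with h' | h' <;>
          simp [hmd, h, h'] at hpar ⊢ <;> simp [Nat.choose]
      rw [h1, hdiv, one_mul] at hmod
      have key : Odd ((m + n).choose m) ↔ Odd ((m / 2 + n / 2).choose (m / 2)) := by
        rw [Nat.odd_iff, Nat.odd_iff]
        unfold Nat.ModEq at hmod
        omega
      have hrec : m / 2 < m := Nat.div_lt_self hm one_lt_two
      rw [key, odd_choose_add (m / 2) (n / 2)]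
      constructor
      · intro h b
        match b with
        | 0 =>
          rw [Nat.testBit_zero, Nat.testBit_zero]
          simp only [decide_eq_true_eq]
          tauto
        | b + 1 =>
          rw [Nat.testBit_succ, Nat.testBit_succ]
          exact h b
      · intro h b
        have := h (b + 1)
        rwa [Nat.testBit_succ, Nat.testBit_succ] at this
  termination_by m => m

/-- Adding numbers with disjoint binary digits is bitwise or. -/
lemma testBit_add_disjoint : ∀ (b x y : ℕ), (∀ c, ¬(x.testBit c ∧ y.testBit c)) →
    (x + y).testBit b = (x.testBit b || y.testBit b)
  | 0, x, y, h => by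
    have h0 := h 0
    rw [Nat.testBit_zero, Nat.testBit_zero] at h0 ⊢
    rw [Nat.testBit_zero]
    simp only [decide_eq_true_eq] at h0
    rcases Nat.mod_two_eq_zero_or_one x with hx | hx <;>
      rcases Nat.mod_two_eq_zero_or_one y with hy | hy <;>
      simp [hx, hy] at h0 ⊢ <;> omega
  | b + 1, x, y, h => by
    have h0 := h 0
    rw [Nat.testBit_zero, Nat.testBit_zero] at h0
    simp only [decide_eq_true_eq] at h0
    have hdiv : (x + y) / 2 = x / 2 + y / 2 := by omega
    rw [Nat.testBit_succ, Nat.testBit_succ, Nat.testBit_succ, hdiv]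
    apply testBit_add_disjoint b
    intro c
    have := h (c + 1)
    rwa [Nat.testBit_succ, Nat.testBit_succ] at this

/-- Bits of a sum of pairwise-bit-disjoint numbers. -/
lemma sum_testBit {ι : Type*} {f : ι → ℕ} (s : Finset ι) :
    (∀ i ∈ s, ∀ j ∈ s, i ≠ j → ∀ b, ¬((f i).testBit b ∧ (f j).testBit b)) → ∀ b : ℕ,
    ((∑ i ∈ s, f i).testBit b = true ↔ ∃ i ∈ s, (f i).testBit b = true) := by
  induction s using Finset.cons_induction with
  | empty => intro _ b; simp
  | cons a s ha ih =>
    intro h b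
    have hpair : ∀ i ∈ s, ∀ j ∈ s, i ≠ j → ∀ c, ¬((f i).testBit c ∧ (f j).testBit c) := by
      intro i hi j hj hij c
      exact h i (Finset.mem_cons_of_mem hi) j (Finset.mem_cons_of_mem hj) hij c
    have hdisj : ∀ c, ¬((f a).testBit c ∧ (∑ i ∈ s, f i).testBit c) := by
      intro c ⟨h1, h2⟩
      obtain ⟨i, hi, hib⟩ := (ih hpair c).mp h2
      exact h a (Finset.mem_cons_self a s) i (Finset.mem_cons_of_mem hi)
        (fun he => ha (he ▸ hi)) c ⟨h1, hib⟩
    rw [Finset.sum_cons, testBit_add_disjoint b _ _ hdisj]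
    simp only [Bool.or_eq_true, Finset.mem_cons]
    rw [ih hpair]
    constructor
    · rintro (h1 | ⟨i, hi, hib⟩)
      · exact ⟨a, Or.inl rfl, h1⟩
      · exact ⟨i, Or.inr hi, hib⟩
    · rintro ⟨i, (rfl | hi), hib⟩
      · exact Or.inl hib
      · exact Or.inr ⟨i, hi, hib⟩

/-- A multinomial coefficient is odd iff the entries have pairwise disjoint binary digits. -/
lemma odd_multinomial_iff {ι : Type*} {s : Finset ι} {f : ι → ℕ} :
    Odd (Nat.multinomial s f) ↔
      ∀ i ∈ s, ∀ j ∈ s, i ≠ j → ∀ b, ¬((f i).testBit b ∧ (f j).testBit b) := by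
  induction s using Finset.cons_induction with
  | empty => simp [Nat.multinomial]
  | cons a s ha ih =>
    rw [Nat.multinomial_cons, Nat.odd_mul, odd_choose_add, ih]
    constructor
    · rintro ⟨hda, hpair⟩ i hi j hj hij b hb
      rw [Finset.mem_cons] at hi hj
      rcases hi with hi | hi
      · rcases hj with hj | hj
        · exact hij (hi.trans hj.symm)
        · rw [hi] at hb
          exact hda b ⟨hb.1, (sum_testBit s hpair b).mpr ⟨j, hj, hb.2⟩⟩
      · rcases hj with hj | hj
        · rw [hj] at hb
          exact hda b ⟨hb.2, (sum_testBit s hpair b).mpr ⟨i, hi, hb.1⟩⟩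
        · exact hpair i hi j hj hij b hb
    · intro h
      have hpair : ∀ i ∈ s, ∀ j ∈ s, i ≠ j → ∀ c, ¬((f i).testBit c ∧ (f j).testBit c) := by
        intro i hi j hj hij c
        exact h i (Finset.mem_cons_of_mem hi) j (Finset.mem_cons_of_mem hj) hij c
      refine ⟨?_, hpair⟩
      intro b ⟨h1, h2⟩
      obtain ⟨i, hi, hib⟩ := (sum_testBit s hpair b).mp h2
      exact h a (Finset.mem_cons_self a s) i (Finset.mem_cons_of_mem hi)
        (fun he => ha (he ▸ hi)) b ⟨h1, hib⟩

/-- Pascal-type recursion for multinomial coefficients. -/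
lemma multinomial_pascal {ι : Type*} [DecidableEq ι] (s : Finset ι) (f : ι → ℕ)
    (h : 0 < ∑ i ∈ s, f i) :
    Nat.multinomial s f =
      ∑ j ∈ s.filter (fun j => 0 < f j),
        Nat.multinomial s (Function.update f j (f j - 1)) := by
  have hP : 0 < ∏ i ∈ s, (f i) ! := Finset.prod_pos fun i _ => Nat.factorial_pos _
  apply Nat.eq_of_mul_eq_mul_left hP
  rw [Nat.multinomial_spec, Finset.mul_sum]
  have hterm : ∀ j ∈ s.filter (fun j => 0 < f j),
      (∏ i ∈ s, (f i) !) * Nat.multinomial s (Function.update f j (f j - 1)) =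
        f j * ((∑ i ∈ s, f i) - 1) ! := by
    intro j hj
    rw [Finset.mem_filter] at hj
    obtain ⟨hjs, hjpos⟩ := hj
    set g := Function.update f j (f j - 1) with hg
    have hprod : ∏ i ∈ s, (f i) ! = f j * ∏ i ∈ s, (g i) ! := by
      rw [← Finset.prod_erase_mul _ _ hjs, ← Finset.prod_erase_mul _ _ hjs, ← mul_assoc,
        mul_comm (f j), mul_assoc]
      congr 1
      · apply Finset.prod_congr rfl
        intro i hi
        rw [hg, Function.update_of_ne (Finset.ne_of_mem_erase hi)]
      · rw [hg, Function.update_self]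
        have hfj : f j = (f j - 1) + 1 := by omega
        rw [hfj, Nat.factorial_succ]
        congr 2 <;> omega
    have hsum : ∑ i ∈ s, g i = (∑ i ∈ s, f i) - 1 := by
      rw [← Finset.add_sum_erase _ g hjs, ← Finset.add_sum_erase _ f hjs]
      have he : ∑ i ∈ s.erase j, g i = ∑ i ∈ s.erase j, f i := by
        apply Finset.sum_congr rfl
        intro i hi
        rw [hg, Function.update_of_ne (Finset.ne_of_mem_erase hi)]
      rw [he, hg, Function.update_self]
      omega
    rw [hprod, mul_assoc, Nat.multinomial_spec, hsum]
  rw [Finset.sum_congr rfl hterm, ← Finset.sum_mul]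
  rw [Finset.sum_filter_of_ne (by intro x _ hx; omega)]
  obtain ⟨c, hc⟩ : ∃ c, ∑ i ∈ s, f i = c + 1 := ⟨(∑ i ∈ s, f i) - 1, by omega⟩
  rw [hc]
  simp [Nat.factorial_succ]

/-- A sum of odd numbers is even iff there are evenly many of them. -/
lemma even_sum_iff_even_card {ι : Type*} {m : ι → ℕ} (S : Finset ι) :
    (∀ i ∈ S, Odd (m i)) → (Even (∑ i ∈ S, m i) ↔ Even S.card) := by
  induction S using Finset.cons_induction with
  | empty => intro _; simp
  | cons a s ha ih =>
    intro h
    have h' : ∀ i ∈ s, Odd (m i) := fun i hi => h i (Finset.mem_cons_of_mem hi)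
    have h1 : ¬ Even (m a) := Nat.not_even_iff_odd.mpr (h a (Finset.mem_cons_self a s))
    rw [Finset.sum_cons, Finset.card_cons, Nat.even_add, Nat.even_add_one, ih h']
    tauto

lemma testBit_factorization_self {x : ℕ} (hx : 0 < x) :
    x.testBit (x.factorization 2) = true := by
  rw [Nat.testBit_eq_decide_div_mod_eq]
  have hodd : ¬ 2 ∣ x / 2 ^ (x.factorization 2) :=
    Nat.not_dvd_ordCompl Nat.prime_two hx.ne'
  simp only [decide_eq_true_eq]
  omega

lemma testBit_factorization_pred {x : ℕ} (hx : 0 < x) :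
    (x - 1).testBit (x.factorization 2) = false := by
  set t := x.factorization 2 with ht
  set p := 2 ^ t with hp
  have hp0 : 0 < p := Nat.pow_pos (n := t) (by norm_num)
  have hdvd : p ∣ x := Nat.ordProj_dvd x 2
  have hodd' : ¬ 2 ∣ x / p := Nat.not_dvd_ordCompl Nat.prime_two hx.ne'
  obtain ⟨y, hxy⟩ := hdvd
  have hyy : x / p = y := by rw [hxy]; exact Nat.mul_div_cancel_left y hp0
  rw [hyy] at hodd'
  have hy1 : 0 < y := by
    rcases Nat.eq_zero_or_pos y with h | h
    · rw [h, mul_zero] at hxy; omega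
    · exact h
  obtain ⟨z, rfl⟩ : ∃ z, y = z + 1 := ⟨y - 1, by omega⟩
  have hx1 : x - 1 = (p - 1) + p * z := by
    rw [hxy]; rw [Nat.mul_add, Nat.mul_one]; omega
  rw [Nat.testBit_eq_decide_div_mod_eq, hx1, ← hp]
  rw [Nat.add_mul_div_left _ _ hp0, Nat.div_eq_of_lt (by omega), Nat.zero_add]
  have hz : z % 2 = 0 := by omega
  simp [hz]

lemma sum_update_sub {ι : Type*} [DecidableEq ι] (s : Finset ι) (a : ι → ℕ) {l : ι}
    (hl : l ∈ s) (hpos : 0 < a l) :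
    ∑ i ∈ s, Function.update a l (a l - 1) i = (∑ i ∈ s, a i) - 1 := by
  rw [← Finset.add_sum_erase _ _ hl, ← Finset.add_sum_erase _ a hl]
  have he : ∑ i ∈ s.erase l, Function.update a l (a l - 1) i = ∑ i ∈ s.erase l, a i := by
    apply Finset.sum_congr rfl
    intro i hi
    rw [Function.update_of_ne (Finset.ne_of_mem_erase hi)]
  rw [he, Function.update_self]
  omega

/-- Key claim: any `l ≠ j` giving an odd decremented multinomial must have the lowest
set bit of `a j` set. -/
lemma claim_bit {k : ℕ} (a : Fin k → ℕ) (j l : Fin k) (hj : 0 < a j) (hlpos : 0 < a l)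
    (hlj : l ≠ j)
    (hoddj : Odd (Nat.multinomial Finset.univ (Function.update a j (a j - 1))))
    (hoddl : Odd (Nat.multinomial Finset.univ (Function.update a l (a l - 1)))) :
    (a l).testBit ((a j).factorization 2) = true := by
  classical
  set t := (a j).factorization 2 with ht
  set gj := Function.update a j (a j - 1) with hgj
  set gl := Function.update a l (a l - 1) with hgl
  have hpj := odd_multinomial_iff.mp hoddj
  have hpl := odd_multinomial_iff.mp hoddl
  -- the sum of gl has bit t set (coming from coordinate j)
  have hglj : gl j = a j := Function.update_of_ne hlj.symm _ _
  have h1 : (∑ i, gl i).testBit t = true :=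
    (sum_testBit Finset.univ hpl t).mpr
      ⟨j, Finset.mem_univ j, by rw [hglj]; exact testBit_factorization_self hj⟩
  -- the two updated sums agree
  have h2 : ∑ i, gl i = ∑ i, gj i := by
    rw [hgl, hgj, sum_update_sub _ _ (Finset.mem_univ l) hlpos,
      sum_update_sub _ _ (Finset.mem_univ j) hj]
  rw [h2] at h1
  obtain ⟨i, _, hib⟩ := (sum_testBit Finset.univ hpj t).mp h1
  have hij : i ≠ j := by
    intro h
    rw [h, hgj, Function.update_self] at hib
    rw [testBit_factorization_pred hj] at hib
    exact Bool.false_ne_true hib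
  have hgji : gj i = a i := Function.update_of_ne hij _ _
  by_cases hil : i = l
  · rw [← hil, ← hgji]; exact hib
  · exfalso
    have hgli : gl i = a i := Function.update_of_ne hil _ _
    refine hpl i (Finset.mem_univ i) j (Finset.mem_univ j) hij t ⟨?_, ?_⟩
    · rw [hgli, ← hgji]; exact hib
    · rw [hglj]; exact testBit_factorization_self hj

/-- If the multinomial coefficient of `a` is even and for some index `j`
with `a j ≥ 1` the multinomial coefficient of `â_j` is odd, then there is a unique index
`l ≠ j` with `a l ≥ 1` such that the multinomial coefficient of `â_l` is odd. -/
theorem multinomial_even_unique_second_decrease (k : ℕ) (a : Fin k → ℕ)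
    (heven : Even (Nat.multinomial Finset.univ a))
    (j : Fin k) (hj : 0 < a j)
    (hodd : Odd (Nat.multinomial Finset.univ (Function.update a j (a j - 1)))) :
    ∃! l : Fin k, l ≠ j ∧ 0 < a l ∧
      Odd (Nat.multinomial Finset.univ (Function.update a l (a l - 1))) := by
  classical
  have hnpos : 0 < ∑ i : Fin k, a i :=
    lt_of_lt_of_le hj (Finset.single_le_sum (fun i _ => Nat.zero_le _) (Finset.mem_univ j))
  set m : Fin k → ℕ := fun l => Nat.multinomial Finset.univ (Function.update a l (a l - 1))
    with hm
  set T : Finset (Fin k) := Finset.univ.filter (fun l => 0 < a l) with hT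
  set S : Finset (Fin k) := T.filter (fun l => Odd (m l)) with hS
  have hpascal : Nat.multinomial Finset.univ a = ∑ l ∈ T, m l :=
    multinomial_pascal Finset.univ a hnpos
  have hsplit : ∑ l ∈ S, m l + ∑ l ∈ T.filter (fun l => ¬ Odd (m l)), m l = ∑ l ∈ T, m l :=
    Finset.sum_filter_add_sum_filter_not T _ m
  have heven2 : Even (∑ l ∈ T.filter (fun l => ¬ Odd (m l)), m l) := by
    apply Finset.even_sum
    intro i hi
    rw [Finset.mem_filter] at hi
    exact Nat.not_odd_iff_even.mp hi.2
  have hevenS : Even (∑ l ∈ S, m l) := by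
    rw [hpascal] at heven
    rw [Nat.even_iff] at heven heven2 ⊢
    omega
  have hScard : Even S.card := by
    rw [← even_sum_iff_even_card S (fun i hi => (Finset.mem_filter.mp hi).2)]
    exact hevenS
  have hjS : j ∈ S := by
    rw [hS, hT]
    simp only [Finset.mem_filter, Finset.mem_univ, true_and]
    exact ⟨hj, hodd⟩
  have hcard2 : 2 ≤ S.card := by
    have h1 : 0 < S.card := Finset.card_pos.mpr ⟨j, hjS⟩
    rcases hScard with ⟨c, hc⟩
    omega
  obtain ⟨l, hl⟩ : (S.erase j).Nonempty := by
    rw [← Finset.card_pos, Finset.card_erase_of_mem hjS]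
    omega
  have hlj : l ≠ j := Finset.ne_of_mem_erase hl
  have hlS : l ∈ S := Finset.mem_of_mem_erase hl
  rw [hS, hT, Finset.mem_filter, Finset.mem_filter] at hlS
  obtain ⟨⟨-, hlpos⟩, hlodd⟩ := hlS
  refine ⟨l, ⟨hlj, hlpos, hlodd⟩, ?_⟩
  rintro y ⟨hyj, hypos, hyodd⟩
  by_contra hyl
  -- both y and l have the lowest set bit of `a j` set, contradicting disjointness
  have hby := claim_bit a j y hj hypos hyj hodd hyodd
  have hbl := claim_bit a j l hj hlpos hlj hodd hlodd
  have hpj := odd_multinomial_iff.mp hodd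
  have hgy : Function.update a j (a j - 1) y = a y := Function.update_of_ne hyj _ _
  have hgl : Function.update a j (a j - 1) l = a l := Function.update_of_ne hlj _ _
  exact hpj y (Finset.mem_univ y) l (Finset.mem_univ l) hyl ((a j).factorization 2)
    ⟨by rw [hgy]; exact hby, by rw [hgl]; exact hbl⟩
end

section
/- If (a_2, …, a_k) are non-negative integers with ∑_{i=2}^k i·a_i = 2^t for some t, then modulo 2, (|a| choose a_2,…,a_k) ≡ ∑_{j=1}^{⌊k/2⌋} (|a|−1 choose a_2,…,a_{2j}−1,…,a_k), where terms with a_{2j} = 0 are interpreted as zero. -/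
open MvPolynomial Finset

namespace Stmt4Aux

/-- The weighted degree of a monomial exponent, with variable `i` given weight `i`. -/
noncomputable def W : (ℕ →₀ ℕ) →+ ℕ := Finsupp.weight id

lemma W_single (i m : ℕ) : W (Finsupp.single i m) = m * i := by
  simp [W, Finsupp.weight_apply, Finsupp.sum_single_index]

noncomputable def sig (s : Finset ℕ) : MvPolynomial ℕ (ZMod 2) := ∑ i ∈ s, X i
noncomputable def tau (s : Finset ℕ) : MvPolynomial ℕ (ZMod 2) :=
  ∑ i ∈ s.filter fun i => ¬ Even i, X i
noncomputable def rho (s : Finset ℕ) : MvPolynomial ℕ (ZMod 2) :=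
  ∑ i ∈ s.filter fun i => Even i, X i

lemma sig_eq (s : Finset ℕ) : sig s = rho s + tau s :=
  (Finset.sum_filter_add_sum_filter_not s _ _).symm

lemma mem_support_sumX {u : Finset ℕ} {d : ℕ →₀ ℕ}
    (hd : d ∈ (∑ i ∈ u, (X i : MvPolynomial ℕ (ZMod 2))).support) :
    ∃ i ∈ u, d = Finsupp.single i 1 := by
  classical
  have h := MvPolynomial.support_sum hd
  rw [Finset.mem_biUnion] at h
  obtain ⟨i, hi, hdi⟩ := h
  rw [MvPolynomial.support_X, Finset.mem_singleton] at hdi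
  exact ⟨i, hi, hdi⟩

/-- In characteristic two, squaring is `expand 2`. -/
lemma sq_expand (p : MvPolynomial ℕ (ZMod 2)) : p ^ 2 = expand 2 p := by
  induction p using MvPolynomial.induction_on with
  | C a =>
      rw [expand_C, ← C_pow]
      congr 1
      revert a; decide
  | add p q hp hq =>
      rw [map_add, ← hp, ← hq, CharTwo.add_sq]
  | mul_X p n hp =>
      rw [map_mul, expand_X, ← hp]; ring

lemma W_tau {s : Finset ℕ} (hs : ∀ i ∈ s, 2 ≤ i) {d : ℕ →₀ ℕ}
    (hd : d ∈ (tau s).support) : W d % 2 = 1 ∧ 3 ≤ W d := by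
  obtain ⟨i, hi, rfl⟩ := mem_support_sumX hd
  rw [Finset.mem_filter] at hi
  have h2 := hs i hi.1
  have h3 : ¬ (2 ∣ i) := fun h => hi.2 ((even_iff_two_dvd).mpr h)
  rw [W_single, one_mul]
  omega

lemma W_rho {s : Finset ℕ} {d : ℕ →₀ ℕ}
    (hd : d ∈ (rho s).support) : W d % 2 = 0 := by
  obtain ⟨i, hi, rfl⟩ := mem_support_sumX hd
  rw [Finset.mem_filter] at hi
  have h3 : 2 ∣ i := (even_iff_two_dvd).mp hi.2
  rw [W_single, one_mul]
  omega

lemma expand_two_monomial (v : ℕ →₀ ℕ) (c : ZMod 2) :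
    expand 2 (monomial v c) = monomial (2 • v) c := by
  classical
  rw [expand_monomial, monomial_eq, Finsupp.prod]

lemma support_expand {p : MvPolynomial ℕ (ZMod 2)} {d : ℕ →₀ ℕ}
    (hd : d ∈ (expand 2 p).support) : ∃ d' ∈ p.support, d = 2 • d' := by
  classical
  conv at hd => rw [p.as_sum, map_sum]
  have h := MvPolynomial.support_sum hd
  rw [Finset.mem_biUnion] at h
  obtain ⟨v, hv, hdv⟩ := h
  rw [expand_two_monomial, support_monomial] at hdv
  rw [if_neg (by rwa [MvPolynomial.mem_support_iff] at hv)] at hdv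
  rw [Finset.mem_singleton] at hdv
  exact ⟨v, hv, hdv⟩

lemma W_smul_two (d : ℕ →₀ ℕ) : W (2 • d) = 2 * W d := by
  rw [map_nsmul, smul_eq_mul]

/-- Key lemma: the "odd part" `τ·σ^n` has no monomial of weighted degree `2^t`. -/
lemma keyB {s : Finset ℕ} (hs : ∀ i ∈ s, 2 ≤ i) :
    ∀ t n (d : ℕ →₀ ℕ), W d = 2 ^ t → coeff d (tau s * (sig s) ^ n) = 0 := by
  intro t
  induction t with
  | zero =>
      intro n d hd
      rw [← MvPolynomial.notMem_support_iff]
      intro hmem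
      obtain ⟨d1, h1, d2, h2, rfl⟩ := Finset.mem_add.mp (MvPolynomial.support_mul _ _ hmem)
      have h3 := (W_tau hs h1).2
      rw [map_add, pow_zero] at hd
      omega
  | succ t ih =>
      intro n d hd
      have hpow : (2 : ℕ) ^ (t + 1) % 2 = 0 := by
        rw [pow_succ, Nat.mul_mod_left]
      rcases Nat.even_or_odd n with he | ho
      · obtain ⟨m, rfl⟩ := he
        have hrw : sig s ^ (m + m) = expand 2 (sig s ^ m) := by
          rw [← sq_expand]; ring
        rw [hrw, ← MvPolynomial.notMem_support_iff]
        intro hmem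
        obtain ⟨d1, h1, d2, h2, rfl⟩ := Finset.mem_add.mp (MvPolynomial.support_mul _ _ hmem)
        have h3 := (W_tau hs h1).1
        obtain ⟨d2', -, rfl⟩ := support_expand h2
        rw [map_add, W_smul_two] at hd
        omega
      · obtain ⟨m, rfl⟩ := ho
        have key : tau s * sig s ^ (2 * m + 1)
            = expand 2 (tau s * sig s ^ m) + tau s * rho s * expand 2 (sig s ^ m) := by
          rw [← sq_expand, ← sq_expand]
          rw [sig_eq s]
          ring
        rw [key, coeff_add]
        have c1 : coeff d (expand 2 (tau s * sig s ^ m)) = 0 := by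
          rw [← MvPolynomial.notMem_support_iff]
          intro hmem
          obtain ⟨d', hd', rfl⟩ := support_expand hmem
          rw [W_smul_two] at hd
          have : W d' = 2 ^ t := by
            rw [pow_succ] at hd; omega
          exact (MvPolynomial.mem_support_iff.mp hd') (ih m d' this)
        have c2 : coeff d (tau s * rho s * expand 2 (sig s ^ m)) = 0 := by
          rw [← MvPolynomial.notMem_support_iff]
          intro hmem
          obtain ⟨d1, h1, d2, h2, rfl⟩ := Finset.mem_add.mp (MvPolynomial.support_mul _ _ hmem)
          obtain ⟨d3, h3, d4, h4, rfl⟩ := Finset.mem_add.mp (MvPolynomial.support_mul _ _ h1)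
          have w3 := (W_tau hs h3).1
          have w4 := W_rho h4
          obtain ⟨d2', -, rfl⟩ := support_expand h2
          rw [map_add, map_add, W_smul_two] at hd
          omega
        rw [c1, c2, add_zero]

lemma prod_Xpow (u : Finset ℕ) (g : ℕ → ℕ) :
    ∏ i ∈ u, (X i : MvPolynomial ℕ (ZMod 2)) ^ g i
      = monomial (∑ i ∈ u, Finsupp.single i (g i)) 1 := by
  classical
  induction u using Finset.induction with
  | empty => simp
  | insert _ _ hx ih =>
      rw [Finset.prod_insert hx, Finset.sum_insert hx, ih, X_pow_eq_monomial,
        monomial_mul, one_mul]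

lemma sum_single_apply (u : Finset ℕ) (g : ℕ → ℕ) (j : ℕ) :
    (∑ i ∈ u, Finsupp.single i (g i)) j = if j ∈ u then g j else 0 := by
  classical
  rw [Finset.sum_apply']
  rw [Finset.sum_congr rfl (fun i _ => Finsupp.single_apply)]
  exact Finset.sum_ite_eq' u j g

/-- The coefficient of `(∑ Xᵢ)^n` on the monomial recording `a` is the multinomial
coefficient (mod 2). -/
lemma coeffA (s : Finset ℕ) (a : ℕ → ℕ) (n : ℕ) (hn : ∑ i ∈ s, a i = n) :
    coeff (∑ i ∈ s, Finsupp.single i (a i)) ((sig s) ^ n)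
      = (Nat.multinomial s a : ZMod 2) := by
  classical
  rw [sig, Finset.sum_pow_eq_sum_piAntidiag, MvPolynomial.coeff_sum]
  set a' : ℕ → ℕ := fun i => if i ∈ s then a i else 0 with ha'
  have hsum' : ∀ g : ℕ → ℕ, (∀ i, g i ≠ 0 → i ∈ s) →
      (((∑ i ∈ s, Finsupp.single i (g i)) = ∑ i ∈ s, Finsupp.single i (a i)) ↔ g = a') := by
    intro g hg
    constructor
    · intro h
      funext j
      have := congrArg (fun f => f j) h
      simp only [sum_single_apply] at this
      by_cases hj : j ∈ s
      · simpa [ha', hj] using this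
      · simp only [ha', hj, if_false]
        by_contra hne
        exact hj (hg j hne)
    · intro h
      subst h
      apply Finset.sum_congr rfl
      intro i hi
      simp [ha', hi]
  rw [Finset.sum_eq_single a']
  · rw [prod_Xpow, ← nsmul_eq_mul, coeff_smul, coeff_monomial]
    rw [if_pos ((hsum' a' (fun i hi => by by_contra hj; simp [ha', hj] at hi)).mpr rfl)]
    rw [nsmul_eq_mul, mul_one]
    congr 1
    exact (Nat.multinomial_congr fun i hi => by simp [ha', hi]).symm
  · intro g hg hne
    rw [prod_Xpow, ← nsmul_eq_mul, coeff_smul, coeff_monomial]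
    rw [Finset.mem_piAntidiag] at hg
    rw [if_neg]
    · simp
    · intro h
      exact hne ((hsum' g hg.2).mp h)
  · intro hnotmem
    exfalso
    apply hnotmem
    rw [Finset.mem_piAntidiag]
    refine ⟨?_, fun i hi => by by_contra hj; simp [ha', hj] at hi⟩
    rw [← hn]
    exact Finset.sum_congr rfl fun i hi => by simp [ha', hi]

lemma reindex {M : Type*} [AddCommMonoid M] (k : ℕ) (f : ℕ → M) :
    ∑ j ∈ Finset.Icc 1 (k / 2), f (2 * j)
      = ∑ i ∈ (Finset.Icc 2 k).filter (fun i => Even i), f i := by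
  classical
  refine Finset.sum_nbij' (i := fun j => 2 * j) (j := fun i => i / 2) ?_ ?_ ?_ ?_ ?_
  · intro j hj
    simp only [Finset.mem_Icc] at hj
    simp only [Finset.mem_filter, Finset.mem_Icc, Nat.even_iff]
    omega
  · intro i hi
    simp only [Finset.mem_filter, Finset.mem_Icc, Nat.even_iff] at hi
    simp only [Finset.mem_Icc]
    omega
  · intro j hj
    show 2 * j / 2 = j
    omega
  · intro i hi
    simp only [Finset.mem_filter, Finset.mem_Icc, Nat.even_iff] at hi
    show 2 * (i / 2) = i
    omega
  · intro j hj; rfl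

end Stmt4Aux

open Stmt4Aux in
/-- If `(a_2, …, a_k)` are non-negative integers with `∑ i·a_i = 2^t`, then
modulo 2, `(|a| choose a) ≡ ∑_{j=1}^{⌊k/2⌋} (|a|−1 choose â_{2j})`, where terms with
`a_{2j} = 0` are interpreted as zero. -/
theorem multinomial_two_power_sum (k t : ℕ) (a : ℕ → ℕ)
    (hsum : ∑ i ∈ Finset.Icc 2 k, i * a i = 2 ^ t) :
    Nat.multinomial (Finset.Icc 2 k) a ≡
      (∑ j ∈ Finset.Icc 1 (k / 2),
        if a (2 * j) = 0 then 0
        else Nat.multinomial (Finset.Icc 2 k) (Function.update a (2 * j) (a (2 * j) - 1)))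
      [MOD 2] := by
  classical
  set s := Finset.Icc 2 k with hs_def
  have hs : ∀ i ∈ s, 2 ≤ i := fun i hi => (Finset.mem_Icc.mp hi).1
  set d : ℕ →₀ ℕ := ∑ i ∈ s, Finsupp.single i (a i) with hd_def
  have hds : ∀ j, d j = if j ∈ s then a j else 0 := fun j => sum_single_apply s a j
  have hWd : W d = 2 ^ t := by
    rw [hd_def, map_sum, ← hsum]
    exact Finset.sum_congr rfl fun i _ => by rw [W_single, mul_comm]
  set S := ∑ i ∈ s, a i with hS_def
  have hS0 : S ≠ 0 := by
    intro h
    have hz : ∀ i ∈ s, a i = 0 := Finset.sum_eq_zero_iff.mp h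
    have : ∑ i ∈ s, i * a i = 0 :=
      Finset.sum_eq_zero fun i hi => by rw [hz i hi, mul_zero]
    rw [hsum] at this
    exact (pow_ne_zero t (by norm_num)) this
  obtain ⟨S', hS'⟩ := Nat.exists_eq_succ_of_ne_zero hS0
  -- the per-term computation for even indices
  have h5 : ∀ i ∈ s.filter (fun i => Even i),
      coeff d (X i * sig s ^ S')
        = ((if a i = 0 then 0
            else Nat.multinomial s (Function.update a i (a i - 1)) : ℕ) : ZMod 2) := by
    intro i hi
    rw [Finset.mem_filter] at hi
    rw [coeff_X_mul']
    by_cases h0 : a i = 0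
    · rw [if_neg, if_pos h0, Nat.cast_zero]
      rw [Finsupp.mem_support_iff]
      simp [hds i, hi.1, h0]
    · rw [if_pos, if_neg h0]
      · have hsum2 : ∑ j ∈ s, Function.update a i (a i - 1) j = S' := by
          rw [Finset.sum_update_of_mem hi.1]
          have hS2 : S = a i + ∑ j ∈ s \ {i}, a j := by
            rw [hS_def, ← Finset.sum_eq_add_sum_sdiff_singleton_of_mem hi.1]
          omega
        have heq : d - Finsupp.single i 1
            = ∑ j ∈ s, Finsupp.single j (Function.update a i (a i - 1) j) := by
          ext j
          rw [Finsupp.tsub_apply, hds j, sum_single_apply, Finsupp.single_apply]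
          by_cases hji : i = j
          · subst hji
            simp [Function.update_apply, hi.1]
          · simp [Function.update_apply, hji, Ne.symm hji]
        rw [heq, coeffA s _ S' hsum2]
      · rw [Finsupp.mem_support_iff, hds i, if_pos hi.1]
        exact h0
  -- main computation in `ZMod 2`
  have main : (Nat.multinomial s a : ZMod 2)
      = ∑ i ∈ s.filter (fun i => Even i),
          ((if a i = 0 then 0
            else Nat.multinomial s (Function.update a i (a i - 1)) : ℕ) : ZMod 2) := by
    have h1 : (Nat.multinomial s a : ZMod 2) = coeff d (sig s ^ S) := (coeffA s a S rfl).symm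
    have h2 : sig s ^ S = rho s * sig s ^ S' + tau s * sig s ^ S' := by
      rw [hS', pow_succ', sig_eq, add_mul]
    have h3 : coeff d (tau s * sig s ^ S') = 0 := keyB hs t S' d hWd
    have h4 : coeff d (rho s * sig s ^ S')
        = ∑ i ∈ s.filter (fun i => Even i), coeff d (X i * sig s ^ S') := by
      rw [rho, Finset.sum_mul, MvPolynomial.coeff_sum]
    rw [h1, h2, coeff_add, h3, add_zero, h4]
    exact Finset.sum_congr rfl h5
  rw [← ZMod.natCast_eq_natCast_iff]
  rw [Nat.cast_sum]
  rw [reindex k (fun i => ((if a i = 0 then 0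
      else Nat.multinomial s (Function.update a i (a i - 1)) : ℕ) : ZMod 2))]
  exact main
end

section
/- Define polynomials q_j ∈ F_2[w_2, w_3] by q_0 = 1, q_{<0} = 0, and q_j = w_2 q_{j−2} + w_3 q_{j−3}. Then q_{2^t − 3} = 0 for all t ≥ 2. -/
open MvPolynomial

/-- The polynomials `q j ∈ F₂[w₂,w₃]` (with `w₂ = X 0`, `w₃ = X 1`): `q 0 = 1`,
`q j = 0` for `j < 0`, and `q j = w₂ q (j-2) + w₃ q (j-3)`. -/
noncomputable def q3 (j : ℤ) : MvPolynomial (Fin 2) (ZMod 2) :=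
  if j < 0 then 0
  else if j = 0 then 1
  else X 0 * q3 (j - 2) + X 1 * q3 (j - 3)
termination_by j.toNat
decreasing_by all_goals omega

lemma q3_neg {j : ℤ} (h : j < 0) : q3 j = 0 := by rw [q3]; simp [h]

lemma q3_rec {j : ℤ} (h : 1 ≤ j) : q3 j = X 0 * q3 (j - 2) + X 1 * q3 (j - 3) := by
  rw [q3]; simp [show ¬ j < 0 by omega, show j ≠ 0 by omega]

lemma q3_zero : q3 0 = 1 := by rw [q3]; simp

lemma two_eq_zero' : (2 : MvPolynomial (Fin 2) (ZMod 2)) = 0 := by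
  exact_mod_cast CharP.cast_eq_zero (MvPolynomial (Fin 2) (ZMod 2)) 2

lemma qAB (n : ℤ) :
    q3 (2*n+1) = X 1 * (q3 (n-1))^2 ∧
    q3 (2*n) = (q3 n)^2 + X 0 * (q3 (n-1))^2 := by
  rcases lt_or_ge n 1 with h | h
  · rcases eq_or_lt_of_le (by omega : n ≤ 0) with rfl | hn
    · constructor
      · rw [show (2*(0:ℤ)+1) = 1 by ring, q3_rec (by norm_num),
          q3_neg (by norm_num : (1:ℤ)-2 < 0), q3_neg (by norm_num : (1:ℤ)-3 < 0),
          q3_neg (by norm_num : (0:ℤ)-1 < 0)]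
        ring
      · rw [show (2*(0:ℤ)) = 0 by ring, q3_zero, q3_neg (by norm_num : (0:ℤ)-1 < 0)]
        ring
    · constructor
      · rw [q3_neg (by omega : 2*n+1 < 0), q3_neg (by omega : n-1 < 0)]; ring
      · rw [q3_neg (by omega : 2*n < 0), q3_neg (by omega : n < 0),
          q3_neg (by omega : n-1 < 0)]; ring
  · have h1 := qAB (n-1)
    have h2 := qAB (n-2)
    have e1 : q3 (2*n+1) = X 0 * q3 (2*n-1) + X 1 * q3 (2*n-2) := by
      have := q3_rec (by omega : (1:ℤ) ≤ 2*n+1)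
      convert this using 3 <;> ring
    have e2 : q3 (2*n) = X 0 * q3 (2*n-2) + X 1 * q3 (2*n-3) := by
      have := q3_rec (by omega : (1:ℤ) ≤ 2*n)
      convert this using 3 <;> ring
    have hA1 : q3 (2*n-1) = X 1 * (q3 (n-2))^2 := by
      have := h1.1; rw [show 2*(n-1)+1 = 2*n-1 by ring, show n-1-1 = n-2 by ring] at this
      exact this
    have hB1 : q3 (2*n-2) = (q3 (n-1))^2 + X 0 * (q3 (n-2))^2 := by
      have := h1.2; rw [show 2*(n-1) = 2*n-2 by ring, show n-1-1 = n-2 by ring] at this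
      exact this
    have hA2 : q3 (2*n-3) = X 1 * (q3 (n-3))^2 := by
      have := h2.1; rw [show 2*(n-2)+1 = 2*n-3 by ring, show n-2-1 = n-3 by ring] at this
      exact this
    have hn : q3 n = X 0 * q3 (n-2) + X 1 * q3 (n-3) := q3_rec h
    constructor
    · rw [e1, hA1, hB1]
      linear_combination (X 0 * X 1 * (q3 (n-2))^2) * two_eq_zero'
    · rw [e2, hB1, hA2, hn]
      linear_combination (- (X 0 * X 1 * q3 (n-2) * q3 (n-3))) * two_eq_zero'
termination_by n.toNat
decreasing_by all_goals omega

/-- **Fukaya.** `q_{2^t − 3} = 0` in `F₂[w₂,w₃]` for all `t ≥ 2`. -/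
theorem q3_two_power_sub_three_eq_zero (t : ℕ) (ht : 2 ≤ t) :
    q3 (2 ^ t - 3) = 0 := by
  induction t, ht using Nat.le_induction with
  | base =>
    have := (qAB 0).1
    rw [show 2*(0:ℤ)+1 = 1 by ring, q3_neg (by norm_num : (0:ℤ)-1 < 0)] at this
    simpa [show ((2:ℤ)^2 - 3) = 1 by norm_num] using this
  | succ t ht ih =>
    have := (qAB (2^t - 2)).1
    rw [show 2*((2:ℤ)^t-2)+1 = 2^(t+1) - 3 by ring, show (2:ℤ)^t-2-1 = 2^t-3 by ring,
      ih] at this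
    simpa using this
end

section
/- Let r_j ∈ F_2[w_2, w_3] satisfy r_0 = 1, r_{<0} = 0, r_{j+1} = w_2 r_j + w_3² r_{j−2}. Then for all s ≥ 0 and sufficiently large j (namely j ≥ 3·2^s), one has r_j = w_2^{2^s} r_{j − 2^s} + w_3^{2^{s+1}} r_{j − 3·2^s}. -/
open MvPolynomial

/-- The polynomials `r j ∈ F₂[w₂,w₃]`: `r 0 = 1`, `r j = 0` for `j < 0`, and
`r (j+1) = w₂ r j + w₃² r (j-2)`, i.e. `r j = w₂ r (j-1) + w₃² r (j-3)` for `j ≥ 1`. -/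
noncomputable def r3 (j : ℤ) : MvPolynomial (Fin 2) (ZMod 2) :=
  if j < 0 then 0
  else if j = 0 then 1
  else X 0 * r3 (j - 1) + (X 1) ^ 2 * r3 (j - 3)
termination_by j.toNat
decreasing_by all_goals omega

lemma r3_rec (j : ℤ) (hj : 1 ≤ j) :
    r3 j = X 0 * r3 (j - 1) + (X 1) ^ 2 * r3 (j - 3) := by
  rw [r3]
  rw [if_neg (by omega), if_neg (by omega)]

/-- For all `s ≥ 0` and all `j ≥ 3·2^s`:
`r_j = w₂^{2^s} r_{j − 2^s} + w₃^{2^{s+1}} r_{j − 3·2^s}`. -/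
theorem r3_frobenius_recursion (s : ℕ) (j : ℤ) (hj : 3 * 2 ^ s ≤ j) :
    r3 j = (X 0) ^ (2 ^ s) * r3 (j - 2 ^ s) + (X 1) ^ (2 ^ (s + 1)) * r3 (j - 3 * 2 ^ s) := by
  induction s generalizing j with
  | zero =>
    simpa using r3_rec j (by omega)
  | succ s ih =>
    have h2 : (0:ℤ) < 2 ^ s := by positivity
    have e1 := ih j (by omega)
    have e2 := ih (j - 2 ^ s) (by omega)
    have e3 := ih (j - 3 * 2 ^ s) (by omega)
    rw [e1, e2, e3]
    have h4 : j - 2 ^ s - 2 ^ s = j - 2 ^ (s + 1) := by ring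
    have h5 : j - 2 ^ s - 3 * 2 ^ s = j - 3 * 2 ^ s - 2 ^ s := by ring
    have h6 : j - 3 * 2 ^ s - 3 * 2 ^ s = j - 3 * 2 ^ (s + 1) := by ring
    rw [h4, h5, h6]
    have hp2 : (2:ℕ) ^ (s + 1) = 2 ^ s + 2 ^ s := by ring
    have hp3 : (2:ℕ) ^ (s + 2) = 2 ^ (s + 1) + 2 ^ (s + 1) := by ring
    have key : ∀ p : MvPolynomial (Fin 2) (ZMod 2), p + p = 0 := fun p =>
      CharTwo.add_self_eq_zero p
    rw [hp2, hp3]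
    ring_nf
    rw [show (s + 1 + 1) = s + 2 from rfl] at *
    abel_nf
    rw [mul_two, key, zero_add]
end

section
/- For any k ≥ 2 and n ≥ k, the quotient ring C = F_2[w_2, …, w_k]/(q_{n−k+1}, …, q_n) is a local ring of Krull dimension 0 with maximal ideal generated by the images of w_2, …, w_k, where q_j are defined by q_0 = 1, q_{<0} = 0, q_j = ∑_{l=2}^k w_l q_{j−l}. -/
open MvPolynomial

/-- The polynomials `q j ∈ F₂[w₂, …, w_k]` (with `w_l = X (l-2)` for `2 ≤ l ≤ k`):
`q 0 = 1`, `q j = 0` for `j < 0`, and `q j = ∑_{l=2}^k w_l q (j-l)`. -/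
noncomputable def qgen (k : ℕ) (j : ℤ) : MvPolynomial (Fin (k - 1)) (ZMod 2) :=
  if j < 0 then 0
  else if j = 0 then 1
  else ∑ i : Fin (k - 1), X i * qgen k (j - ((i : ℕ) + 2))
termination_by j.toNat
decreasing_by omega

lemma qgen_neg (k : ℕ) {j : ℤ} (h : j < 0) : qgen k j = 0 := by
  rw [qgen, if_pos h]

lemma qgen_zero (k : ℕ) : qgen k 0 = 1 := by
  rw [qgen]; norm_num

lemma qgen_pos (k : ℕ) {j : ℤ} (h : 0 < j) :
    qgen k j = ∑ i : Fin (k - 1), X i * qgen k (j - ((i : ℕ) + 2)) := by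
  rw [qgen, if_neg (by omega), if_neg (by omega)]

lemma qmem (k n : ℕ) (hn : k ≤ n) (j : ℤ) (hj : (n : ℤ) - k + 1 ≤ j) :
    qgen k j ∈ Ideal.span ((fun j : ℤ => qgen k j) '' Set.Icc ((n : ℤ) - k + 1) (n : ℤ)) := by
  by_cases h : j ≤ (n : ℤ)
  · exact Ideal.subset_span ⟨j, ⟨hj, h⟩, rfl⟩
  · rw [qgen_pos k (by omega)]
    refine Ideal.sum_mem _ fun i _ => Ideal.mul_mem_left _ _ ?_
    have hi : (i : ℕ) < k - 1 := i.isLt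
    exact qmem k n hn (j - ((i : ℕ) + 2)) (by omega)
termination_by j.toNat
decreasing_by omega

lemma constantCoeff_qgen (k : ℕ) {j : ℤ} (hj : 0 < j) : constantCoeff (qgen k j) = 0 := by
  rw [qgen_pos k hj]
  simp

lemma sub_C_mem {k : ℕ} (f : MvPolynomial (Fin (k - 1)) (ZMod 2)) :
    f - C (constantCoeff f) ∈
      Ideal.span (Set.range (X : Fin (k - 1) → MvPolynomial (Fin (k - 1)) (ZMod 2))) := by
  induction f using MvPolynomial.induction_on with
  | C a => simp
  | add p q hp hq =>
    have : p + q - C (constantCoeff (p + q)) =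
        (p - C (constantCoeff p)) + (q - C (constantCoeff q)) := by
      rw [map_add, map_add]; ring
    rw [this]; exact Ideal.add_mem _ hp hq
  | mul_X p i hp =>
    have : p * X i - C (constantCoeff (p * X i)) = p * X i := by
      simp
    rw [this]
    exact Ideal.mul_mem_left _ _ (Ideal.subset_span ⟨i, rfl⟩)

lemma psCoeffMonomialMul {S : Type*} [CommRing S] (m d : ℕ) (a : S) (φ : PowerSeries S) :
    PowerSeries.coeff d (PowerSeries.monomial m a * φ) =
      if m ≤ d then a * PowerSeries.coeff (d - m) φ else 0 := by
  have hmono : PowerSeries.monomial m a = PowerSeries.C a * PowerSeries.X ^ m := by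
    ext n
    rw [PowerSeries.coeff_monomial, PowerSeries.coeff_C_mul_X_pow]
  rw [hmono, mul_assoc, PowerSeries.coeff_C_mul, PowerSeries.coeff_X_pow_mul']
  simp [mul_ite]

lemma nilpotent_X_mk (k n : ℕ) (hk : 2 ≤ k) (hn : k ≤ n) (i : Fin (k - 1)) :
    IsNilpotent (Ideal.Quotient.mk
      (Ideal.span ((fun j : ℤ => qgen k j) '' Set.Icc ((n : ℤ) - k + 1) (n : ℤ))) (X i)) := by
  set I : Ideal (MvPolynomial (Fin (k - 1)) (ZMod 2)) :=
    Ideal.span ((fun j : ℤ => qgen k j) '' Set.Icc ((n : ℤ) - k + 1) (n : ℤ)) with hI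
  set π := Ideal.Quotient.mk I with hπ
  set Q : PowerSeries (MvPolynomial (Fin (k - 1)) (ZMod 2) ⧸ I) :=
    PowerSeries.mk (fun d => π (qgen k d)) with hQ
  set U : Polynomial (MvPolynomial (Fin (k - 1)) (ZMod 2) ⧸ I) :=
    1 + ∑ i' : Fin (k - 1), Polynomial.monomial ((i' : ℕ) + 2) (π (X i')) with hU
  set P : Polynomial (MvPolynomial (Fin (k - 1)) (ZMod 2) ⧸ I) :=
    ∑ j ∈ Finset.range (n - k + 1), Polynomial.monomial j (π (qgen k (j : ℤ))) with hP
  have hUc : (U : PowerSeries _) =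
      1 + ∑ i' : Fin (k - 1), PowerSeries.monomial ((i' : ℕ) + 2) (π (X i')) := by
    rw [hU, ← Polynomial.coeToPowerSeries.ringHom_apply, map_add, map_one, map_sum]
    simp only [Polynomial.coeToPowerSeries.ringHom_apply, Polynomial.coe_monomial]
  have key : (U : PowerSeries _) * Q = 1 := by
    ext d
    rw [hUc, add_mul, one_mul, Finset.sum_mul, map_add, map_sum]
    simp only [psCoeffMonomialMul]
    rcases Nat.eq_zero_or_pos d with hd | hd
    · subst hd
      simp [hQ, qgen_zero]
    · have hsum : π (qgen k (d : ℤ)) =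
          ∑ i' : Fin (k - 1), if (i' : ℕ) + 2 ≤ d then
            π (X i') * PowerSeries.coeff (d - ((i' : ℕ) + 2)) Q else 0 := by
        rw [qgen_pos k (by exact_mod_cast hd), map_sum]
        refine Finset.sum_congr rfl fun i' _ => ?_
        by_cases hle : (i' : ℕ) + 2 ≤ d
        · have harg : (d : ℤ) - ((i' : ℕ) + 2) = ((d - ((i' : ℕ) + 2) : ℕ) : ℤ) := by omega
          rw [if_pos hle, map_mul, hQ, PowerSeries.coeff_mk, harg]
        · rw [if_neg hle, qgen_neg k (by push_cast; omega), mul_zero, map_zero]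
      rw [hQ, PowerSeries.coeff_mk, ← hQ, ← hsum, ← map_add,
        CharTwo.add_self_eq_zero, map_zero, PowerSeries.coeff_one, if_neg (by omega)]
  have hPc : (P : PowerSeries _) = Q := by
    ext d
    rw [Polynomial.coeff_coe, hQ, PowerSeries.coeff_mk, hP, Polynomial.finset_sum_coeff]
    simp only [Polynomial.coeff_monomial]
    by_cases hd : d < n - k + 1
    · rw [Finset.sum_eq_single d (fun j _ hj => if_neg hj)
        (fun hmem => absurd (Finset.mem_range.mpr hd) hmem), if_pos rfl]
    · rw [Finset.sum_eq_zero (fun j hj => if_neg (by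
        have := Finset.mem_range.mp hj; omega))]
      symm
      rw [Ideal.Quotient.eq_zero_iff_mem]
      exact qmem k n hn _ (by push_cast; omega)
  have hUP : U * P = 1 := by
    rw [← Polynomial.coe_inj, Polynomial.coe_mul, hPc, key, Polynomial.coe_one]
  have hUnit : IsUnit U := IsUnit.of_mul_eq_one _ hUP
  have hnil := (Polynomial.isUnit_iff_coeff_isUnit_isNilpotent.mp hUnit).2
    ((i : ℕ) + 2) (by omega)
  have hc : U.coeff ((i : ℕ) + 2) = π (X i) := by
    rw [hU, Polynomial.coeff_add, Polynomial.coeff_one, if_neg (by omega),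
      Polynomial.finset_sum_coeff]
    simp only [Polynomial.coeff_monomial]
    rw [Finset.sum_eq_single i (fun i' _ hne => if_neg (fun hEq => hne (Fin.ext (by omega))))
      (fun hmem => absurd (Finset.mem_univ i) hmem), if_pos rfl, zero_add]
  rwa [hc] at hnil

/-- For `k ≥ 2` and `n ≥ k`, the quotient ring
`C = F₂[w₂,…,w_k]/(q_{n−k+1}, …, q_n)` is a local ring of Krull dimension 0, whose
(unique) maximal ideal is generated by the images of `w₂, …, w_k`. -/
theorem char_subring_local_dim_zero (k n : ℕ) (hk : 2 ≤ k) (hn : k ≤ n) :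
    let I : Ideal (MvPolynomial (Fin (k - 1)) (ZMod 2)) :=
      Ideal.span ((fun j : ℤ => qgen k j) '' Set.Icc ((n : ℤ) - k + 1) (n : ℤ))
    let m : Ideal ((MvPolynomial (Fin (k - 1)) (ZMod 2)) ⧸ I) :=
      Ideal.map (Ideal.Quotient.mk I)
        (Ideal.span (Set.range (X : Fin (k - 1) → MvPolynomial (Fin (k - 1)) (ZMod 2))))
    IsLocalRing ((MvPolynomial (Fin (k - 1)) (ZMod 2)) ⧸ I) ∧
    ringKrullDim ((MvPolynomial (Fin (k - 1)) (ZMod 2)) ⧸ I) = 0 ∧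
    m.IsMaximal ∧
    ∀ m' : Ideal ((MvPolynomial (Fin (k - 1)) (ZMod 2)) ⧸ I), m'.IsMaximal → m' = m := by
  intro I m
  set π := Ideal.Quotient.mk I with hπ
  have hIconst : ∀ g ∈ I, constantCoeff g = 0 := by
    intro g hg
    have hle : I ≤ RingHom.ker (constantCoeff (σ := Fin (k - 1)) (R := ZMod 2)) := by
      rw [Ideal.span_le]
      rintro _ ⟨j, ⟨hj1, hj2⟩, rfl⟩
      exact constantCoeff_qgen k (by omega)
    exact hle hg
  have hIne : I ≠ ⊤ := by
    intro h
    have h1 : (1 : MvPolynomial (Fin (k - 1)) (ZMod 2)) ∈ I := by rw [h]; trivial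
    have := hIconst 1 h1
    simp at this
  haveI : Nontrivial ((MvPolynomial (Fin (k - 1)) (ZMod 2)) ⧸ I) :=
    Ideal.Quotient.nontrivial_iff.mpr hIne
  have hnilX : ∀ i : Fin (k - 1), IsNilpotent (π (X i)) := nilpotent_X_mk k n hk hn
  have hm_nil : m ≤ nilradical _ := by
    have hm : m = Ideal.span (π '' Set.range X) := Ideal.map_span _ _
    rw [hm, Ideal.span_le]
    rintro _ ⟨_, ⟨i, rfl⟩, rfl⟩
    exact mem_nilradical.mpr (hnilX i)
  have hunits : ∀ r : (MvPolynomial (Fin (k - 1)) (ZMod 2)) ⧸ I, r ∉ m → IsUnit r := by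
    intro r hr
    obtain ⟨f, rfl⟩ := Ideal.Quotient.mk_surjective r
    have hsub : π f - π (C (constantCoeff f)) ∈ m := by
      have h1 := Ideal.mem_map_of_mem π (sub_C_mem f)
      rwa [map_sub] at h1
    have h01 : ∀ x : ZMod 2, x = 0 ∨ x = 1 := by decide
    rcases h01 (constantCoeff f) with hc | hc
    · exact absurd (by simpa [hc] using hsub) hr
    · have hmem : π f - 1 ∈ m := by simpa [hc] using hsub
      have hnil2 : IsNilpotent (π f - 1) := mem_nilradical.mp (hm_nil hmem)
      have := hnil2.isUnit_one_add
      rwa [add_sub_cancel] at this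
  have hmmax : m.IsMaximal := by
    rw [Ideal.isMaximal_iff]
    refine ⟨fun h1 => ?_, fun J x hmJ hxm hxJ => ?_⟩
    · have : IsNilpotent (1 : (MvPolynomial (Fin (k - 1)) (ZMod 2)) ⧸ I) :=
        mem_nilradical.mp (hm_nil h1)
      obtain ⟨e, he⟩ := this
      rw [one_pow] at he
      have h1I : (1 : MvPolynomial (Fin (k - 1)) (ZMod 2)) ∈ I :=
        Ideal.Quotient.eq_zero_iff_mem.mp ((map_one π).trans he)
      exact hIne ((Ideal.eq_top_iff_one I).mpr h1I)
    · rw [← Ideal.eq_top_iff_one]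
      exact J.eq_top_of_isUnit_mem hxJ (hunits x hxm)
  have huniq : ∀ m' : Ideal ((MvPolynomial (Fin (k - 1)) (ZMod 2)) ⧸ I),
      m'.IsMaximal → m' = m := by
    intro m' hm'
    haveI := hm'.isPrime
    exact (hmmax.eq_of_le hm'.ne_top (le_trans hm_nil (nilradical_le_prime m'))).symm
  have hloc : IsLocalRing ((MvPolynomial (Fin (k - 1)) (ZMod 2)) ⧸ I) :=
    IsLocalRing.of_unique_max_ideal ⟨m, hmmax, fun J hJ => huniq J hJ⟩
  refine ⟨hloc, ?_, hmmax, huniq⟩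
  haveI : Unique (PrimeSpectrum ((MvPolynomial (Fin (k - 1)) (ZMod 2)) ⧸ I)) :=
    { default := ⟨m, hmmax.isPrime⟩
      uniq := fun p => by
        have hp := p.isPrime
        have : m = p.asIdeal :=
          hmmax.eq_of_le hp.ne_top (le_trans hm_nil (nilradical_le_prime _))
        exact PrimeSpectrum.ext this.symm }
  exact Order.krullDim_eq_zero_of_unique
end
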